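/- Let 𝔪 be an idempotent ideal of a commutative unital ring V. Then the multiplication map μ : 𝔪 ⊗_V 𝔪 → 𝔪 becomes an isomorphism after tensoring once more with 𝔪; that is, 𝔪 ⊗_V 𝔪 ⊗_V 𝔪 → 𝔪 ⊗_V 𝔪 (multiplying the last two factors) is an isomorphism of V-modules. -/
import Mathlib

open TensorProduct

set_option maxHeartbeats 1000000
set_option synthInstance.maxHeartbeats 1000000

/-- The multiplication map `μ : 𝔪 ⊗[V] 𝔪 → 𝔪`. -/
noncomputable def mulMapI {V : Type*} [CommRing V] (𝔪 : Ideal V) :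
    ↥𝔪 ⊗[V] ↥𝔪 →ₗ[V] ↥𝔪 :=
  (Submodule.inclusion Ideal.mul_le_right).comp (Submodule.mulMap' 𝔪 𝔪)

lemma mulMapI_tmul {V : Type*} [CommRing V] (𝔪 : Ideal V) (x y : ↥𝔪) :
    (mulMapI 𝔪 (x ⊗ₜ[V] y) : V) = (x : V) * y := rfl

/-- Scalar multiplication by `c ∈ 𝔪` on `𝔪 ⊗ 𝔪` factors through `μ`. -/
lemma smul_eq_tmul_mulMapI {V : Type*} [CommRing V] (𝔪 : Ideal V) (c : ↥𝔪)
    (z : ↥𝔪 ⊗[V] ↥𝔪) : (c : V) • z = c ⊗ₜ[V] (mulMapI 𝔪 z) := by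
  induction z with
  | zero => simp
  | tmul x y =>
      rw [smul_tmul']
      have hx : (c : V) • x = (x : V) • c := by
        ext; simp [mul_comm]
      rw [hx, smul_tmul]
      congr 1
  | add a b ha hb => simp only [smul_add, map_add, tmul_add, ha, hb]

/-- Elements of `𝔪` kill the kernel of `μ`. -/
lemma smul_ker_eq_zero {V : Type*} [CommRing V] (𝔪 : Ideal V) (c : ↥𝔪)
    (z : ↥𝔪 ⊗[V] ↥𝔪) (hz : mulMapI 𝔪 z = 0) : (c : V) • z = 0 := by
  rw [smul_eq_tmul_mulMapI, hz, tmul_zero]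

/-- `𝔪 ⊗ ker μ = 0` when `𝔪` is idempotent. -/
lemma tensor_ker_eq_zero {V : Type*} [CommRing V] (𝔪 : Ideal V) (hm : 𝔪 * 𝔪 = 𝔪)
    (w : ↥𝔪 ⊗[V] ↥(LinearMap.ker (mulMapI 𝔪))) : w = 0 := by
  induction w with
  | zero => rfl
  | tmul a k =>
      have ha : (a : V) ∈ 𝔪 * 𝔪 := by rw [hm]; exact a.2
      have key : ∀ x (hx : x ∈ 𝔪 * 𝔪),
          (⟨x, Ideal.mul_le_right hx⟩ : ↥𝔪) ⊗ₜ[V] k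
            = (0 : ↥𝔪 ⊗[V] ↥(LinearMap.ker (mulMapI 𝔪))) := by
        intro x hx
        induction hx using Submodule.mul_induction_on' with
        | mem_mul_mem b hb c hc =>
            have h1 : (⟨b * c, Ideal.mul_le_right (Submodule.mul_mem_mul hb hc)⟩ : ↥𝔪)
                = c • (⟨b, hb⟩ : ↥𝔪) := by
              ext; simp [mul_comm]
            rw [h1, smul_tmul]
            have hck : c • k = 0 := by
              ext
              exact smul_ker_eq_zero 𝔪 ⟨c, hc⟩ (k : ↥𝔪 ⊗[V] ↥𝔪) k.2
            rw [hck, tmul_zero]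
        | add x hx' y hy' px py =>
            have h1 : (⟨x + y, Ideal.mul_le_right (add_mem hx' hy')⟩ : ↥𝔪)
                = (⟨x, Ideal.mul_le_right hx'⟩ : ↥𝔪) + ⟨y, Ideal.mul_le_right hy'⟩ := rfl
            rw [h1, add_tmul, px, py, add_zero]
      have := key (a : V) ha
      simpa using this
  | add a b ha hb => rw [ha, hb, add_zero]

lemma aux_inj {R Q N P : Type*} [CommRing R] [AddCommGroup Q] [AddCommGroup N] [AddCommGroup P]
    [Module R Q] [Module R N] [Module R P] (g : N →ₗ[R] P)
    (hsurj : Function.Surjective g)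
    (h0 : ∀ w : Q ⊗[R] ↥(LinearMap.ker g), w = 0) :
    Function.Injective (LinearMap.lTensor Q g) := by
  intro x y hxy
  have h : LinearMap.lTensor Q g (x - y) = 0 := by rw [map_sub, hxy, sub_self]
  obtain ⟨w, hw⟩ := (lTensor_exact Q (g.exact_subtype_ker_map) hsurj (x - y)).mp h
  rw [h0 w, map_zero] at hw
  exact sub_eq_zero.mp hw.symm

/-- For an idempotent ideal 𝔪, the map 𝔪 ⊗ 𝔪 ⊗ 𝔪 → 𝔪 ⊗ 𝔪 (multiplying
the last two factors, i.e. id_𝔪 ⊗ μ) is an isomorphism of V-modules. -/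
theorem stmt3 {V : Type*} [CommRing V] (𝔪 : Ideal V) (hm : 𝔪 * 𝔪 = 𝔪) :
    Function.Bijective (LinearMap.lTensor ↥𝔪 (mulMapI 𝔪)) := by
  have hsurj : Function.Surjective (mulMapI 𝔪) := by
    intro x
    obtain ⟨y, hy⟩ := Submodule.mulMap'_surjective 𝔪 𝔪 ⟨(x : V), by rw [hm]; exact x.2⟩
    refine ⟨y, ?_⟩
    ext
    simp [mulMapI, hy, Submodule.inclusion]
  exact ⟨aux_inj (mulMapI 𝔪) hsurj (tensor_ker_eq_zero 𝔪 hm),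
    LinearMap.lTensor_surjective ↥𝔪 hsurj⟩
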